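/- In the shock-surface setting, fix η ≠ 0, assume B > 0, and set N̄₀ := η R (A/(1 − k r²)) (E/C) (ψ C)⁻¹ and N̄₁ := η R / A. Then for every real number λ (representing the shock speed ṙ̄ = dr̄/dt), with n̄₀ := −λ/(R ψ C) and n̄₁ := 1/R + λ Ṙ r̄/(R² A), one has −(1/B) N̄₀ n̄₀ + A N̄₁ n̄₁ = η. (That is, the inner product ⟨N̄, n̄⟩, computed with the TOV inverse metric coefficients −1/B and A, equals the prescribed constant η = ⟨N, n⟩; so the transverse vector normalization is continuous across the shock.) -/

import Mathlib

open Real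

/-! On the shock surface `M = (4π/3) ρ r̄³` the TOV coefficient `C` equals `R² A`, and the
matching condition then reads `1 / B = R⁴ A (1 - k r²) ψ²`. With these two identities the
time part `-(1/B) N̄₀ n̄₀` of the inner product collapses to `-η λ Ṙ r̄ / (R A)`, which is exactly
the `λ`-dependent part of the space part `A N̄₁ n̄₁ = η + η λ Ṙ r̄ / (R A)`. -/

theorem C_eq_sq_mul_A_of_shock_surface {𝒢 ρ R r rb M A C : ℝ} (hrb : rb = R * r) (hrb0 : rb ≠ 0)
    (hM : M = 4 * π / 3 * ρ * rb ^ 3) (hA : A = 1 - 2 * 𝒢 * M / rb)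
    (hC : C = R ^ 2 * (1 - 8 * π * 𝒢 / 3 * ρ * R ^ 2 * r ^ 2)) :
    C = R ^ 2 * A := by
  subst hC hA hM hrb
  field_simp [hrb0]
  ring

theorem time_term_eq {k R r A C E ψ B η lam : ℝ} (hR : R ≠ 0) (hkr : 1 - k * r ^ 2 ≠ 0)
    (hA : A ≠ 0) (hψ : ψ ≠ 0) (hCA : C = R ^ 2 * A)
    (hmatch : B * (R ^ 2 * (1 - k * r ^ 2)) * ψ ^ 2 * C = 1) :
    -(1 / B) * (η * R * (A / (1 - k * r ^ 2)) * (E / C) * (ψ * C)⁻¹) *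
        (-(lam / (R * ψ * C))) = η * E * lam / (R ^ 2 * A) := by
  have hB : B ≠ 0 := by
    rintro rfl
    simp at hmatch
  subst hCA
  field_simp
  linear_combination (-(η * E * lam)) * hmatch

theorem space_term_eq {R A Rdot rb η lam : ℝ} (hR : R ≠ 0) (hA : A ≠ 0) :
    A * (η * R / A) * (1 / R + lam * Rdot * rb / (R ^ 2 * A)) =
      η + η * lam * Rdot * rb / (R * A) := by
  field_simp

theorem stmt_17 (𝒢 k ρ R Rdot r rb M A C E ψ B η : ℝ)
    (hR : 0 < R) (hkr : 1 - k * r ^ 2 ≠ 0)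
    (hrb : rb = R * r) (hrb0 : rb ≠ 0)
    (hM : M = 4 * π / 3 * ρ * rb ^ 3)
    (hA : A = 1 - 2 * 𝒢 * M / rb) (hA0 : A ≠ 0)
    (hC : C = R ^ 2 * (1 - 8 * π * 𝒢 / 3 * ρ * R ^ 2 * r ^ 2))
    (hE : E = -(R * Rdot * rb))
    (hψ : ψ ≠ 0)
    (hmatch : B * (R ^ 2 - k * rb ^ 2) * ψ ^ 2 * C = 1) :
    ∀ lam : ℝ,
      -(1 / B) * (η * R * (A / (1 - k * r ^ 2)) * (E / C) * (ψ * C)⁻¹) *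
          (-(lam / (R * ψ * C))) +
        A * (η * R / A) * (1 / R + lam * Rdot * rb / (R ^ 2 * A)) = η := by
  intro lam
  have hCA : C = R ^ 2 * A := C_eq_sq_mul_A_of_shock_surface hrb hrb0 hM hA hC
  have hmatch' : B * (R ^ 2 * (1 - k * r ^ 2)) * ψ ^ 2 * C = 1 := by
    rw [hrb] at hmatch
    linear_combination hmatch
  rw [time_term_eq hR.ne' hkr hA0 hψ hCA hmatch', space_term_eq hR.ne' hA0, hE]
  field_simp
  ring
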